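/- Let H be a minimal hypergraph with edge set F, |F| = m, minimum degree δ, maximum degree Δ, and average rank l(H). Then for every nonempty proper subset S of F, l(H)/Δ < (1/|S|)·( Σ_{f∈S} |f| − Σ_{i=δ}^{Δ} Σ_{j=1}^{i} σᵢʲ(S)·(j − i/Δ) ), where σᵢʲ(S) is the number of vertices of degree i in H that lie in exactly j hyperedges of S. -/

import Mathlib

open Finset

/-- A simple, loopless hypergraph: hyperedges have at least 2 vertices, no hyperedge
contains another, and every vertex lies in some hyperedge. -/
structure SimpleHypergraph (V : Type) [Fintype V] [DecidableEq V] where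
  F : Finset (Finset V)
  no_loops : ∀ f ∈ F, 2 ≤ f.card
  simple : ∀ f ∈ F, ∀ g ∈ F, f ⊆ g → f = g
  cover : ∀ v : V, ∃ f ∈ F, v ∈ f

variable {V : Type} [Fintype V] [DecidableEq V]

/-- A hypergraph is linear if distinct hyperedges share at most one vertex. -/
def SimpleHypergraph.Linear (H : SimpleHypergraph V) : Prop :=
  ∀ f ∈ H.F, ∀ g ∈ H.F, f ≠ g → (f ∩ g).card ≤ 1

/-- The degree of a vertex: the number of hyperedges containing it. -/
def SimpleHypergraph.deg (H : SimpleHypergraph V) (v : V) : ℕ :=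
  (H.F.filter (fun f => v ∈ f)).card

/-- The 2-section of a hypergraph. -/
def SimpleHypergraph.twoSection (H : SimpleHypergraph V) : SimpleGraph V where
  Adj u v := u ≠ v ∧ ∃ f ∈ H.F, u ∈ f ∧ v ∈ f
  symm := ⟨by
    rintro u v ⟨h, f, hf, h1, h2⟩
    exact ⟨h.symm, f, hf, h2, h1⟩⟩
  loopless := ⟨fun v h => h.1 rfl⟩

/-- The rank: the maximum size of a hyperedge. -/
def SimpleHypergraph.rank (H : SimpleHypergraph V) : ℕ := H.F.sup Finset.card

/-- The anti-rank: the minimum size of a hyperedge. -/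
noncomputable def SimpleHypergraph.antiRank (H : SimpleHypergraph V) : ℕ :=
  sInf (Finset.card '' (H.F : Set (Finset V)))

/-- The minimum degree. -/
noncomputable def SimpleHypergraph.minDegree (H : SimpleHypergraph V) : ℕ :=
  sInf (Set.range H.deg)

/-- The maximum degree. -/
def SimpleHypergraph.maxDegree (H : SimpleHypergraph V) : ℕ :=
  Finset.univ.sup H.deg

/-- The average rank: the average size of a hyperedge. -/
noncomputable def SimpleHypergraph.avgRank (H : SimpleHypergraph V) : ℝ :=
  (∑ f ∈ H.F, (f.card : ℝ)) / H.F.card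

/-- A tree decomposition of a graph. -/
structure TreeDecomp {W : Type} (G : SimpleGraph W) where
  τ : Type
  finT : Fintype τ
  tree : SimpleGraph τ
  conn : tree.Connected
  acyc : tree.IsAcyclic
  bags : τ → Finset W
  /-- (T1): the bags containing a vertex form a nonempty connected subtree. -/
  bags_conn : ∀ v : W, (tree.induce {t | v ∈ bags t}).Connected
  /-- (T2): every edge is contained in some bag. -/
  bags_edge : ∀ u v : W, G.Adj u v → ∃ t, u ∈ bags t ∧ v ∈ bags t

/-- The width of a tree decomposition: max bag size minus one. -/
noncomputable def TreeDecomp.width {W : Type} {G : SimpleGraph W} (d : TreeDecomp G) : ℕ :=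
  letI := d.finT
  (Finset.univ.sup fun t => (d.bags t).card) - 1

/-- The treewidth of a graph. -/
noncomputable def treewidth {W : Type} (G : SimpleGraph W) : ℕ :=
  sInf {n | ∃ d : TreeDecomp G, d.width = n}

/-- A supertree decomposition of a hypergraph. -/
structure SupertreeDecomp (H : SimpleHypergraph V) extends TreeDecomp H.twoSection where
  lam : τ → Finset (Finset V)
  lam_sub : ∀ t, lam t ⊆ H.F
  /-- (TII): every bag is covered by its hyperedges. -/
  bag_cover : ∀ t, ∀ v ∈ bags t, ∃ f ∈ lam t, v ∈ f
  /-- (TIII): the nodes containing a hyperedge form a nonempty connected subtree. -/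
  lam_conn : ∀ f ∈ H.F, (tree.induce {t | f ∈ lam t}).Connected
  /-- (TIV): intersecting hyperedges appear together in some bag. -/
  lam_meet : ∀ f ∈ H.F, ∀ g ∈ H.F, (f ∩ g).Nonempty → ∃ t, f ∈ lam t ∧ g ∈ lam t

/-- The width of a supertree decomposition: max number of hyperedges in a bag. -/
noncomputable def SupertreeDecomp.width {H : SimpleHypergraph V} (d : SupertreeDecomp H) : ℕ :=
  letI := d.finT
  Finset.univ.sup fun t => (d.lam t).card

/-- The supertree width of a hypergraph. -/
noncomputable def stw (H : SimpleHypergraph V) : ℕ :=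
  sInf {n | ∃ d : SupertreeDecomp H, d.width = n}

/-- The line graph of a hypergraph. -/
def SimpleHypergraph.lineGraph (H : SimpleHypergraph V) : SimpleGraph {f // f ∈ H.F} where
  Adj f g := f ≠ g ∧ ((f : Finset V) ∩ (g : Finset V)).Nonempty
  symm := ⟨by
    rintro f g ⟨h, hfg⟩
    exact ⟨h.symm, by rwa [Finset.inter_comm]⟩⟩
  loopless := ⟨fun f h => h.1 rfl⟩

/-- A hypergraph is 2-regular if every vertex has degree exactly 2. -/
def SimpleHypergraph.TwoRegular (H : SimpleHypergraph V) : Prop := ∀ v : V, H.deg v = 2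

/-- For a 2-regular linear hypergraph, the dual is a simple graph on the hyperedges:
two hyperedges are adjacent iff some vertex lies in both. -/
def SimpleHypergraph.dualGraph (H : SimpleHypergraph V) : SimpleGraph {f // f ∈ H.F} where
  Adj f g := f ≠ g ∧ ∃ v : V, v ∈ (f : Finset V) ∧ v ∈ (g : Finset V)
  symm := ⟨by
    rintro f g ⟨h, v, h1, h2⟩
    exact ⟨h.symm, v, h2, h1⟩⟩
  loopless := ⟨fun f h => h.1 rfl⟩

/-!
Let `l = l(H)`, `s = |S|` and let `A = Σᵢ Σⱼ i·σᵢʲ(S)` be the total degree of the vertices met by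
`S`. Double counting gives `Σᵢ i·nᵢ = l·m`, so minimality at `S` says `(l·m − A)/(m − s) < l`,
that is `l·s < A`. Double counting again gives `Σ_{f∈S} |f| = Σᵢ Σⱼ j·σᵢʲ(S)`, so the right-hand
side of the claim collapses to `A/(s·Δ)`.
-/

theorem Finset.sum_card_eq_sum_card_filter_mem {α : Type*} [Fintype α] [DecidableEq α]
    (S : Finset (Finset α)) : ∑ f ∈ S, #f = ∑ a, #{f ∈ S | a ∈ f} := by
  simp_rw [card_filter, sum_comm (s := univ)]
  simp

theorem Finset.sum_mul_card_filter_eq_sum {α : Type*} (s : Finset α) (g : α → ℕ)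
    (t : Finset ℕ) (hg : ∀ a ∈ s, g a ≠ 0 → g a ∈ t) :
    ∑ i ∈ t, i * #{a ∈ s | g a = i} = ∑ a ∈ s, g a := by
  have hmaps : ∀ a ∈ s, g a ∈ insert 0 t := fun a ha => by
    by_cases h : g a = 0
    · simp [h]
    · exact mem_insert_of_mem (hg a ha h)
  rw [← sum_fiberwise_of_maps_to hmaps, sum_insert_zero (by simp)]
  refine sum_congr rfl fun i _ => ?_
  rw [sum_congr rfl fun a ha => (mem_filter.1 ha).2, sum_const, smul_eq_mul, mul_comm]

namespace SimpleHypergraph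

variable (H : SimpleHypergraph V)

theorem deg_mem_Icc (v : V) : H.deg v ∈ Icc H.minDegree H.maxDegree :=
  mem_Icc.2 ⟨Nat.sInf_le ⟨v, rfl⟩, le_sup (mem_univ v)⟩

theorem maxDegree_pos (hF : H.F.Nonempty) : 0 < H.maxDegree := by
  obtain ⟨f, hf⟩ := hF
  obtain ⟨v, hv⟩ := card_pos.1 (lt_of_lt_of_le two_pos (H.no_loops f hf))
  have hdeg : 0 < H.deg v := card_pos.2 ⟨f, mem_filter.2 ⟨hf, hv⟩⟩
  exact hdeg.trans_le (mem_Icc.1 (H.deg_mem_Icc v)).2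

theorem avgRank_mul_card (hF : H.F.Nonempty) :
    H.avgRank * #H.F = ∑ f ∈ H.F, (#f : ℝ) :=
  div_mul_cancel₀ _ (Nat.cast_ne_zero.2 hF.card_pos.ne')

theorem sum_mul_card_deg_eq_sum_card :
    ∑ i ∈ Icc H.minDegree H.maxDegree, i * #{v | H.deg v = i} = ∑ f ∈ H.F, #f := by
  rw [sum_mul_card_filter_eq_sum _ _ _ fun v _ _ => H.deg_mem_Icc v,
    sum_card_eq_sum_card_filter_mem]
  rfl

theorem sum_sum_mul_card_deg_filter_eq_sum_card {S : Finset (Finset V)} (hS : S ⊆ H.F) :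
    ∑ i ∈ Icc H.minDegree H.maxDegree, ∑ j ∈ Icc 1 i,
        j * #{v | H.deg v = i ∧ #{f ∈ S | v ∈ f} = j} = ∑ f ∈ S, #f := by
  have hinner : ∀ i, ∑ j ∈ Icc 1 i, j * #{v | H.deg v = i ∧ #{f ∈ S | v ∈ f} = j}
      = ∑ v ∈ {v | H.deg v = i}, #{f ∈ S | v ∈ f} := fun i => by
    simp_rw [← filter_filter]
    refine sum_mul_card_filter_eq_sum _ _ _ fun v hv h0 =>
      mem_Icc.2 ⟨Nat.one_le_iff_ne_zero.2 h0, ?_⟩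
    exact (mem_filter.1 hv).2 ▸ card_le_card (filter_subset_filter _ hS)
  simp_rw [hinner]
  rw [sum_fiberwise_of_maps_to fun v _ => H.deg_mem_Icc v, sum_card_eq_sum_card_filter_mem]

end SimpleHypergraph

theorem mul_lt_of_sub_div_sub_lt {l m s A : ℝ} (hsm : s < m) (h : (l * m - A) / (m - s) < l) :
    l * s < A := by
  rw [div_lt_iff₀ (sub_pos.2 hsm)] at h
  linarith

/-- Lemma 3.1: for a minimal hypergraph `H` and every nonempty proper
subset `S` of its edge set, `l(H)/Δ < (1/|S|)(Σ_{f∈S}|f| − Σ_{i,j} σᵢʲ(S)(j − i/Δ))`. -/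
theorem minimal_hypergraph_ineq (H : SimpleHypergraph V) (δ Δ m : ℕ)
    (hδ : δ = H.minDegree) (hΔ : Δ = H.maxDegree) (hm : m = H.F.card)
    (σ : Finset (Finset V) → ℕ → ℕ → ℕ)
    (hσ : ∀ S i j, σ S i j =
      (Finset.univ.filter
        (fun v : V => H.deg v = i ∧ (S.filter (fun f => v ∈ f)).card = j)).card)
    -- `H` is minimal: `l(H_S) < l(H)` for every nonempty proper `S ⊆ F`.
    (hmin : ∀ S ⊆ H.F, S.Nonempty → S ≠ H.F →
      (∑ i ∈ Finset.Icc δ Δ, (i : ℝ) *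
          (((Finset.univ.filter (fun v : V => H.deg v = i)).card : ℝ)
            - ∑ j ∈ Finset.Icc 1 i, (σ S i j : ℝ))) / ((m : ℝ) - S.card)
        < H.avgRank) :
    ∀ S ⊆ H.F, S.Nonempty → S ≠ H.F →
      H.avgRank / (Δ : ℝ) <
        (1 / (S.card : ℝ)) * ((∑ f ∈ S, (f.card : ℝ))
          - ∑ i ∈ Finset.Icc δ Δ, ∑ j ∈ Finset.Icc 1 i,
              (σ S i j : ℝ) * ((j : ℝ) - (i : ℝ) / (Δ : ℝ))) := by
  intro S hS hSne hSF
  subst hδ hΔ hm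
  have hF : H.F.Nonempty := hSne.mono hS
  have hΔpos : (0 : ℝ) < H.maxDegree := Nat.cast_pos.2 (H.maxDegree_pos hF)
  have hsm : (#S : ℝ) < #H.F := Nat.cast_lt.2 (card_lt_card (ssubset_of_subset_of_ne hS hSF))
  set A : ℝ := ∑ i ∈ Icc H.minDegree H.maxDegree, ∑ j ∈ Icc 1 i, (i : ℝ) * σ S i j
  have hdeg : ∑ i ∈ Icc H.minDegree H.maxDegree, (i : ℝ) * #{v | H.deg v = i}
      = H.avgRank * #H.F := by
    rw [H.avgRank_mul_card hF]
    exact_mod_cast H.sum_mul_card_deg_eq_sum_card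
  have hdegIn : ∑ i ∈ Icc H.minDegree H.maxDegree, ∑ j ∈ Icc 1 i, (j : ℝ) * σ S i j
      = ∑ f ∈ S, (#f : ℝ) := by
    simp only [hσ]
    exact_mod_cast H.sum_sum_mul_card_deg_filter_eq_sum_card hS
  have hlA : H.avgRank * #S < A := by
    refine mul_lt_of_sub_div_sub_lt hsm ?_
    simpa only [mul_sub, mul_sum, sum_sub_distrib, hdeg] using hmin S hS hSne hSF
  have hrhs : ∑ i ∈ Icc H.minDegree H.maxDegree, ∑ j ∈ Icc 1 i,
        (σ S i j : ℝ) * ((j : ℝ) - (i : ℝ) / H.maxDegree)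
      = ∑ f ∈ S, (#f : ℝ) - A / H.maxDegree := by
    rw [← hdegIn, sum_div, ← sum_sub_distrib]
    refine sum_congr rfl fun i _ => ?_
    rw [sum_div, ← sum_sub_distrib]
    exact sum_congr rfl fun j _ => by ring
  calc H.avgRank / H.maxDegree < A / #S / H.maxDegree :=
        div_lt_div_of_pos_right ((lt_div_iff₀ (Nat.cast_pos.2 hSne.card_pos)).2 hlA) hΔpos
    _ = _ := by rw [hrhs, sub_sub_cancel]; ring
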